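/- arXiv:2507.05796 — 3 statements merged into one kernel-verified Lean document; each statement's English description precedes it below -/
import Mathlib

section
/- Let R = k[[x_1, ..., x_n]] and let I ⊆ R be a monomial ideal. Then the m-th jet support closure I^{m-jsc} is also a monomial ideal, for every m ∈ ℕ. -/
open Polynomial

/-- The truncated polynomial ring `A[t]/(t^(m+1))`. -/
abbrev JetTrunc (A : Type) [CommRing A] (m : ℕ) : Type :=
  Polynomial A ⧸ (Ideal.span {(X : Polynomial A) ^ (m + 1)} : Ideal (Polynomial A))

/-- The image of the variable `t` in `A[t]/(t^(m+1))`. -/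
noncomputable def jetT (A : Type) [CommRing A] (m : ℕ) : JetTrunc A m :=
  Ideal.Quotient.mk _ (X : Polynomial A)

/-- A test datum for the `m`-th jet closure of an ideal `I` of a local `k`-algebra `(R, 𝔪)`:
a `k`-algebra `A` together with a `k`-algebra map `φ : R → A[t]/(t^(m+1))` killing `I`
and sending the maximal ideal `𝔪` into `(t)` (i.e. an `A`-point of the scheme of local
`m`-jets of `Spec (R/I)` over the closed point). -/
structure JetTest (k : Type) [CommRing k] {R : Type} [CommRing R] [Algebra k R]
    (𝔪 : Ideal R) (m : ℕ) (I : Ideal R) where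
  A : Type
  [instCommRing : CommRing A]
  [instAlgebra : Algebra k A]
  φ : R →ₐ[k] JetTrunc A m
  ker_I : ∀ f ∈ I, φ f = 0
  max_to_t : ∀ f ∈ 𝔪, φ f ∈ Ideal.span {jetT A m}

attribute [instance] JetTest.instCommRing JetTest.instAlgebra

/-- The `m`-th jet closure `I^{m-jc}` of an ideal `I` in a local `k`-algebra `(R, 𝔪)`:
the intersection of the kernels of all jet test maps (functor-of-points description of the
kernel of `μ_m : R → R_m[t]/(t^(m+1), I_m, 𝔪^e)`). -/
noncomputable def jetClosure (k : Type) [CommRing k] {R : Type} [CommRing R] [Algebra k R]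
    (𝔪 : Ideal R) (m : ℕ) (I : Ideal R) : Ideal R :=
  sInf { J : Ideal R | ∃ T : JetTest k 𝔪 m I, J = RingHom.ker T.φ }

/-- A test datum for the `m`-th jet support closure: like a jet closure test,
but with the coefficient `k`-algebra `A` required to be reduced (functor-of-points
description of maps from `(R_m/(I_m + 𝔪^e))_red`). -/
structure JetSupportTest (k : Type) [CommRing k] {R : Type} [CommRing R] [Algebra k R]
    (𝔪 : Ideal R) (m : ℕ) (I : Ideal R) where
  A : Type
  [instCommRing : CommRing A]
  [instReduced : IsReduced A]
  [instAlgebra : Algebra k A]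
  φ : R →ₐ[k] JetTrunc A m
  ker_I : ∀ f ∈ I, φ f = 0
  max_to_t : ∀ f ∈ 𝔪, φ f ∈ Ideal.span {jetT A m}

attribute [instance] JetSupportTest.instCommRing JetSupportTest.instReduced
  JetSupportTest.instAlgebra

/-- The `m`-th jet support closure `I^{m-jsc}` of an ideal `I` in a local `k`-algebra
`(R, 𝔪)`. -/
noncomputable def jetSupportClosure (k : Type) [CommRing k] {R : Type} [CommRing R]
    [Algebra k R] (𝔪 : Ideal R) (m : ℕ) (I : Ideal R) : Ideal R :=
  sInf { J : Ideal R | ∃ T : JetSupportTest k 𝔪 m I, J = RingHom.ker T.φ }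

/-- The maximal ideal `(x_1, ..., x_n)` of the formal power series ring `k[[x_1, ..., x_n]]`. -/
noncomputable def mIdeal (k : Type) [Field k] (n : ℕ) : Ideal (MvPowerSeries (Fin n) k) :=
  RingHom.ker (MvPowerSeries.constantCoeff : MvPowerSeries (Fin n) k →+* k)

/-- An ideal of `k[[x_1, ..., x_n]]` is a monomial ideal if it is generated by a set of
monomials. -/
def IsMonomialIdeal {k : Type} [Field k] {n : ℕ} (I : Ideal (MvPowerSeries (Fin n) k)) :
    Prop :=
  ∃ S : Set (Fin n →₀ ℕ),
    I = Ideal.span ((fun d => MvPowerSeries.monomial d (1 : k)) '' S)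

/-!
The torus `(kˣ)ⁿ` acts on `k[[x_1, ..., x_n]]` by rescaling the variables. The action preserves
the monomial ideal `I` and the maximal ideal `𝔪`, so twisting a jet support test by it gives
another test, and `I^{m-jsc}` is torus-stable. Every test kills `𝔪^{m+1}`, so on a test `φ`
twisted by `λ`, an element `f = ∑ c_d x^d` of the closure gives `∑_{|d| ≤ m} λ^d c_d φ(x^d) = 0`.
As `k` is infinite, these identities for all `λ` force `c_d φ(x^d) = 0` for each `d`: every
monomial of degree `≤ m` occurring in `f` lies in the closure, and the rest of `f` lies in
`𝔪^{m+1}`, which is spanned by monomials of degree `m + 1` and is contained in the closure.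
-/

section JetSupportClosure

variable {k R : Type} [CommRing k] [CommRing R] [Algebra k R] {𝔪 I : Ideal R} {m : ℕ}

theorem jetT_pow_eq_zero (A : Type) [CommRing A] (m : ℕ) : jetT A m ^ (m + 1) = 0 := by
  rw [jetT, ← map_pow, Ideal.Quotient.eq_zero_iff_mem]
  exact Ideal.mem_span_singleton_self _

namespace JetSupportTest

theorem φ_eq_zero_of_mem_pow (T : JetSupportTest k 𝔪 m I) {f : R} (hf : f ∈ 𝔪 ^ (m + 1)) :
    T.φ f = 0 := by
  have hmap : Ideal.map T.φ 𝔪 ≤ Ideal.span {jetT T.A m} :=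
    Ideal.map_le_iff_le_comap.mpr T.max_to_t
  have hpow : Ideal.map T.φ (𝔪 ^ (m + 1)) ≤ ⊥ :=
    calc Ideal.map T.φ (𝔪 ^ (m + 1)) = Ideal.map T.φ 𝔪 ^ (m + 1) := Ideal.map_pow _ _ _
      _ ≤ Ideal.span {jetT T.A m} ^ (m + 1) := Ideal.pow_right_mono hmap _
      _ = ⊥ := by rw [Ideal.span_singleton_pow, jetT_pow_eq_zero, Ideal.span_singleton_eq_bot]
  exact (Submodule.mem_bot _).mp (hpow (Ideal.mem_map_of_mem _ hf))

noncomputable def comp (T : JetSupportTest k 𝔪 m I) (g : R →ₐ[k] R) (hI : ∀ f ∈ I, g f ∈ I)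
    (h𝔪 : ∀ f ∈ 𝔪, g f ∈ 𝔪) : JetSupportTest k 𝔪 m I where
  A := T.A
  φ := T.φ.comp g
  ker_I f hf := T.ker_I _ (hI f hf)
  max_to_t f hf := T.max_to_t _ (h𝔪 f hf)

end JetSupportTest

theorem mem_jetSupportClosure_iff {f : R} :
    f ∈ jetSupportClosure k 𝔪 m I ↔ ∀ T : JetSupportTest k 𝔪 m I, T.φ f = 0 := by
  simp [jetSupportClosure, RingHom.mem_ker]

theorem pow_le_jetSupportClosure : 𝔪 ^ (m + 1) ≤ jetSupportClosure k 𝔪 m I :=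
  fun _ hf => mem_jetSupportClosure_iff.mpr fun T => T.φ_eq_zero_of_mem_pow hf

end JetSupportClosure

namespace MvPowerSeries

variable {σ R : Type*}

theorem rescale_monomial [CommSemiring R] (a : σ → R) (d : σ →₀ ℕ) (r : R) :
    rescale a (MvPowerSeries.monomial d r) =
      (d.prod fun i e => a i ^ e) • MvPowerSeries.monomial d r := by
  classical
  ext e
  rw [coeff_rescale, coeff_smul, MvPowerSeries.coeff_monomial]
  split_ifs with h
  · rw [h]
  · rw [mul_zero, mul_zero]

theorem coe_eq_sum_smul_monomial [CommSemiring R] (p : MvPolynomial σ R) :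
    (p : MvPowerSeries σ R) = ∑ d ∈ p.support, p.coeff d • MvPowerSeries.monomial d 1 := by
  conv_lhs => rw [p.as_sum]
  rw [← MvPolynomial.coeToMvPowerSeries.ringHom_apply, map_sum]
  refine Finset.sum_congr rfl fun d _ => ?_
  rw [MvPolynomial.coeToMvPowerSeries.ringHom_apply, MvPolynomial.coe_monomial, ← map_smul,
    smul_eq_mul, mul_one]

theorem span_range_X_pow [CommSemiring R] (K : ℕ) :
    Ideal.span (Set.range X) ^ K =
      Ideal.span ((MvPowerSeries.monomial · (1 : R)) '' {d : σ →₀ ℕ | d.degree = K}) := by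
  have hX : Ideal.map MvPolynomial.coeToMvPowerSeries.ringHom (MvPolynomial.idealOfVars σ R) =
      Ideal.span (Set.range X) := by
    simp [Ideal.map_span, ← Set.range_comp, Function.comp_def]
  rw [← hX, ← Ideal.map_pow, MvPolynomial.pow_idealOfVars_eq_span, Ideal.map_span,
    Set.image_image]
  simp [Set.preimage]

variable [Finite σ] [CommRing R]

theorem mem_span_range_X_pow_of_coeff_eq_zero {K : ℕ} {f : MvPowerSeries σ R}
    (hf : ∀ d : σ →₀ ℕ, d.degree < K → coeff d f = 0) :
    f ∈ Ideal.span (Set.range X) ^ K := by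
  -- `MvPowerSeries σ R` is the adic completion of `MvPolynomial σ R` at the ideal `I` of the
  -- variables, and there the kernel of evaluation at level `K` is `I ^ K • ⊤`.
  set I := MvPolynomial.idealOfVars σ R
  set e := toAdicCompletionAlgEquiv σ R
  have hker : e f ∈ (AdicCompletion.eval I (MvPolynomial σ R) K).ker := by
    rw [LinearMap.mem_ker]
    show (toAdicCompletion σ R f).val K = 0
    rw [toAdicCompletion_apply_eq_mk_truncTotal, Ideal.Quotient.eq_zero_iff_mem, smul_eq_mul,
      Ideal.mul_top, MvPolynomial.mem_pow_idealOfVars_iff']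
    intro d hd
    rw [coeff_truncTotal _ hd, hf d hd]
  rw [← AdicCompletion.pow_smul_top_eq_ker_eval (MvPolynomial.idealOfVars_fg σ R)] at hker
  have hf' := Submodule.mem_map_of_mem (f := e.symm.toLinearMap) hker
  rw [Submodule.map_smul'', Submodule.map_top, LinearEquiv.range, Ideal.smul_top_eq_map,
    Ideal.map_pow, Ideal.map_span] at hf'
  simpa [← Set.range_comp, Function.comp_def, algebraMap_apply'] using hf'

theorem sub_truncTotal_mem_span_range_X_pow (K : ℕ) (f : MvPowerSeries σ R) :
    f - truncTotal K f ∈ Ideal.span (Set.range X) ^ K :=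
  mem_span_range_X_pow_of_coeff_eq_zero fun d hd => by
    rw [map_sub, MvPolynomial.coeff_coe, coeff_truncTotal _ hd, sub_self]

end MvPowerSeries

theorem eq_zero_of_forall_sum_prod_pow_smul_eq_zero {k V σ : Type*} [Field k] [Infinite k]
    [AddCommGroup V] [Module k V] {D : Finset (σ →₀ ℕ)} {v : (σ →₀ ℕ) → V}
    (h : ∀ l : σ → k, ∑ d ∈ D, (d.prod fun i e => l i ^ e) • v d = 0) {d : σ →₀ ℕ}
    (hd : d ∈ D) : v d = 0 := by
  classical
  rw [← Module.forall_dual_apply_eq_zero_iff k]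
  intro ψ
  have hP : ∑ d ∈ D, MvPolynomial.monomial d (ψ (v d)) = 0 :=
    MvPolynomial.funext fun l => by
      simpa [MvPolynomial.eval_monomial, mul_comm] using congr(ψ $(h l))
  simpa [MvPolynomial.coeff_sum, MvPolynomial.coeff_monomial, hd] using
    congr(MvPolynomial.coeff d $hP)

open MvPowerSeries

section PowerSeries

variable {k : Type} [Field k] {n m : ℕ} {I : Ideal (MvPowerSeries (Fin n) k)}

theorem IsMonomialIdeal.rescaleAlgHom_mem (hI : IsMonomialIdeal I) (l : Fin n → k)
    {f : MvPowerSeries (Fin n) k} (hf : f ∈ I) : rescaleAlgHom l f ∈ I := by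
  obtain ⟨S, rfl⟩ := hI
  refine Ideal.span_le.mpr ?_ (Ideal.map_span (rescaleAlgHom l) _ ▸ Ideal.mem_map_of_mem _ hf)
  rintro _ ⟨_, ⟨d, hd, rfl⟩, rfl⟩
  rw [rescaleAlgHom_apply, rescale_monomial]
  exact Submodule.smul_of_tower_mem _ _ (Ideal.subset_span ⟨d, hd, rfl⟩)

theorem rescaleAlgHom_mem_mIdeal (l : Fin n → k) {f : MvPowerSeries (Fin n) k}
    (hf : f ∈ mIdeal k n) : rescaleAlgHom l f ∈ mIdeal k n := by
  rw [mIdeal, RingHom.mem_ker, ← coeff_zero_eq_constantCoeff_apply] at hf ⊢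
  simp [rescaleAlgHom_apply, hf]

theorem span_range_X_le_mIdeal : Ideal.span (Set.range X) ≤ mIdeal k n :=
  Ideal.span_le.mpr <| Set.range_subset_iff.mpr fun i => by simp [mIdeal]

theorem JetSupportTest.φ_eq_sum_truncTotal (T : JetSupportTest k (mIdeal k n) m I)
    (f : MvPowerSeries (Fin n) k) :
    T.φ f = ∑ d ∈ (truncTotal (m + 1) f).support,
      (truncTotal (m + 1) f).coeff d • T.φ (MvPowerSeries.monomial d 1) := by
  have htail : T.φ (f - truncTotal (m + 1) f) = 0 :=
    T.φ_eq_zero_of_mem_pow <| Ideal.pow_right_mono span_range_X_le_mIdeal _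
      (sub_truncTotal_mem_span_range_X_pow _ f)
  rw [map_sub, sub_eq_zero] at htail
  simp only [htail, coe_eq_sum_smul_monomial, map_sum, map_smul]

theorem monomial_mem_jetSupportClosure [Infinite k] (hI : IsMonomialIdeal I)
    {f : MvPowerSeries (Fin n) k} (hf : f ∈ jetSupportClosure k (mIdeal k n) m I)
    {d : Fin n →₀ ℕ} (hd : d ∈ (truncTotal (m + 1) f).support) :
    MvPowerSeries.monomial d (1 : k) ∈ jetSupportClosure k (mIdeal k n) m I := by
  rw [mem_jetSupportClosure_iff] at hf ⊢
  intro T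
  have hv : (truncTotal (m + 1) f).coeff d • T.φ (MvPowerSeries.monomial d 1) = 0 := by
    refine eq_zero_of_forall_sum_prod_pow_smul_eq_zero (k := k)
      (v := fun d => (truncTotal (m + 1) f).coeff d • T.φ (MvPowerSeries.monomial d 1))
      (fun l => ?_) hd
    have := hf (T.comp (rescaleAlgHom l) (fun _ => hI.rescaleAlgHom_mem l)
      (fun _ => rescaleAlgHom_mem_mIdeal l))
    rw [JetSupportTest.φ_eq_sum_truncTotal] at this
    refine Eq.trans (Finset.sum_congr rfl fun e _ => ?_) this
    change _ = _ • T.φ (rescaleAlgHom l _)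
    rw [rescaleAlgHom_apply, rescale_monomial, map_smul]
    exact smul_comm _ _ _
  exact (smul_eq_zero.mp hv).resolve_left (MvPolynomial.mem_support_iff.mp hd)

theorem monomial_mem_jetSupportClosure_of_degree_eq {d : Fin n →₀ ℕ} (hd : d.degree = m + 1) :
    MvPowerSeries.monomial d (1 : k) ∈ jetSupportClosure k (mIdeal k n) m I :=
  pow_le_jetSupportClosure <| Ideal.pow_right_mono span_range_X_le_mIdeal _ <|
    (span_range_X_pow _).ge (Ideal.subset_span ⟨d, hd, rfl⟩)

end PowerSeries

theorem isMonomialIdeal_jetSupportClosure_general (k : Type) [Field k] [CharZero k]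
    (n : ℕ) (I : Ideal (MvPowerSeries (Fin n) k)) (hI : IsMonomialIdeal I) (m : ℕ) :
    IsMonomialIdeal (jetSupportClosure k (mIdeal k n) m I) := by
  set J := jetSupportClosure k (mIdeal k n) m I
  refine ⟨{d | MvPowerSeries.monomial d 1 ∈ J}, le_antisymm (fun f hf => ?_) ?_⟩
  · set p := truncTotal (m + 1) f
    rw [← add_sub_cancel (p : MvPowerSeries (Fin n) k) f]
    refine add_mem ?_ ?_
    · rw [coe_eq_sum_smul_monomial]
      exact Ideal.sum_mem _ fun d hd => Submodule.smul_of_tower_mem _ _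
        (Ideal.subset_span ⟨d, monomial_mem_jetSupportClosure hI hf hd, rfl⟩)
    · refine (span_range_X_pow (m + 1)).le.trans (Ideal.span_mono ?_)
        (sub_truncTotal_mem_span_range_X_pow (m + 1) f)
      rintro _ ⟨d, hd, rfl⟩
      exact ⟨d, monomial_mem_jetSupportClosure_of_degree_eq hd, rfl⟩
  · exact Ideal.span_le.mpr fun _ ⟨d, hd, hf⟩ => hf ▸ hd

/-- if `I ⊆ k[[x_1, ..., x_n]]` is a monomial ideal, then so is its `m`-th
jet support closure `I^{m-jsc}`, for every `m`. -/
theorem isMonomialIdeal_jetSupportClosure (k : Type) [Field k] [IsAlgClosed k] [CharZero k]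
    (n : ℕ) (I : Ideal (MvPowerSeries (Fin n) k)) (hI : IsMonomialIdeal I) (m : ℕ) :
    IsMonomialIdeal (jetSupportClosure k (mIdeal k n) m I) :=
  isMonomialIdeal_jetSupportClosure_general k n I hI m
end

section
/- Jet support closures need not be monotone: in R = k[[x, y]] with I = (x^2 y^3), the monomial x^2 y^2 belongs to I^{5-jsc} but not to I^{4-jsc}; hence I^{5-jsc} ⊄ I^{4-jsc}. -/
open Polynomial

/-- The variable `x` in `k[[x, y]]`. -/
noncomputable def xx (k : Type) [Field k] : MvPowerSeries (Fin 2) k := MvPowerSeries.X 0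

/-- The variable `y` in `k[[x, y]]`. -/
noncomputable def yy (k : Type) [Field k] : MvPowerSeries (Fin 2) k := MvPowerSeries.X 1

/-
Write a jet support test as `φ : R → A[t]/(t^(m+1))` with `A` reduced, and `φ x = t u`,
`φ y = t v` for `x, y ∈ 𝔪`. If `x^p y^q ∈ I` with `p + q ≤ m`, then `t^m u^p v^q = 0`, so
`u^p v^q ∈ (t)`. This ideal is the kernel of `t ↦ 0` onto the reduced ring `A`, hence radical,
so `u v ∈ (t)` and `φ (x y) ∈ (t^3)`. For `x²y³` and `m = 5` this gives `φ (x²y²) ∈ (t^6) = 0`.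
For `m = 4` the substitution `x, y ↦ t` into `k[t]/(t^5)` kills `x²y³` but sends `x²y²` to
`t^4 ≠ 0`.
-/

namespace MvPolynomial

variable {σ R B : Type*} [CommRing R] [CommRing B] [Algebra R B] {J : Ideal B} {a : σ → B}

theorem aeval_monomial_mem_pow (ha : ∀ i, a i ∈ J) (d : σ →₀ ℕ) (c : R) :
    aeval a (monomial d c) ∈ J ^ d.degree := by
  rw [aeval_monomial, Finsupp.degree_apply, ← Finset.prod_pow_eq_pow_sum]
  exact Ideal.mul_mem_left _ _ (Ideal.prod_mem_prod fun i _ => Ideal.pow_mem_pow (ha i) _)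

theorem aeval_mem_pow_of_le_degree (ha : ∀ i, a i ∈ J) {n : ℕ} (P : MvPolynomial σ R)
    (hP : ∀ d ∈ P.support, n ≤ d.degree) : aeval a P ∈ J ^ n := by
  rw [P.as_sum, map_sum]
  exact Ideal.sum_mem _ fun d hd =>
    Ideal.pow_le_pow_right (hP d hd) (aeval_monomial_mem_pow ha d _)

end MvPolynomial

namespace MvPowerSeries

variable {σ R B : Type*} [Finite σ] [CommRing R] [CommRing B] [Algebra R B]
  {J : Ideal B} {N : ℕ}

theorem aeval_truncTotal_eq (hJ : J ^ N = ⊥) {a : σ → B} (ha : ∀ i, a i ∈ J)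
    {f : MvPowerSeries σ R} {P : MvPolynomial σ R}
    (hP : ∀ d : σ →₀ ℕ, d.degree < N → P.coeff d = coeff d f) :
    MvPolynomial.aeval a (truncTotal N f) = MvPolynomial.aeval a P := by
  rw [← sub_eq_zero, ← map_sub, ← Ideal.mem_bot, ← hJ]
  refine MvPolynomial.aeval_mem_pow_of_le_degree ha _ fun d hd => ?_
  by_contra! hlt
  rw [MvPolynomial.mem_support_iff, MvPolynomial.coeff_sub, coeff_truncTotal _ hlt, hP d hlt,
    sub_self] at hd
  exact hd rfl

/-- Monomials of degree at least `N` vanish on an ideal `J` with `J ^ N = 0`, so a power series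
can be evaluated at a point of `J` through its truncation. -/
noncomputable def aevalOfPowEqBot (hJ : J ^ N = ⊥) (a : σ → B) (ha : ∀ i, a i ∈ J) :
    MvPowerSeries σ R →ₐ[R] B where
  toFun f := MvPolynomial.aeval a (truncTotal N f)
  map_one' := by
    rw [aeval_truncTotal_eq hJ ha (P := 1) fun d _ => by
      rw [← MvPolynomial.coeff_coe, MvPolynomial.coe_one], map_one]
  map_mul' f g := by
    rw [aeval_truncTotal_eq hJ ha (P := truncTotal N f * truncTotal N g)
      fun d hd => coeff_truncTotal_mul_truncTotal_eq_coeff_mul f g hd, map_mul]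
  map_zero' := by simp
  map_add' f g := by simp
  commutes' r := by
    rw [aeval_truncTotal_eq hJ ha (P := MvPolynomial.C r) fun d _ => by
      rw [← MvPolynomial.coeff_coe, MvPolynomial.coe_C, c_eq_algebraMap], MvPolynomial.aeval_C]

variable (hJ : J ^ N = ⊥) {a : σ → B} (ha : ∀ i, a i ∈ J)

theorem aevalOfPowEqBot_X (i : σ) : aevalOfPowEqBot (R := R) hJ a ha (X i) = a i :=
  (aeval_truncTotal_eq hJ ha (P := MvPolynomial.X i) fun d _ => by
    rw [← MvPolynomial.coeff_coe, MvPolynomial.coe_X]).trans (MvPolynomial.aeval_X a i)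

theorem aevalOfPowEqBot_mem {f : MvPowerSeries σ R} (hf : constantCoeff f = 0) :
    aevalOfPowEqBot hJ a ha f ∈ J := by
  suffices aevalOfPowEqBot hJ a ha f ∈ J ^ 1 by rwa [pow_one] at this
  refine MvPolynomial.aeval_mem_pow_of_le_degree ha _ fun d hd => ?_
  rw [Nat.one_le_iff_ne_zero, Ne, Finsupp.degree_eq_zero_iff]
  rintro rfl
  rw [MvPolynomial.mem_support_iff, ← MvPolynomial.constantCoeff_eq,
    constantCoeff_truncTotal_eq_ite, hf, ite_self] at hd
  exact hd rfl

end MvPowerSeries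

section JetTrunc

variable (A : Type) [CommRing A] (m : ℕ)

theorem jetT_pow_succ : jetT A m ^ (m + 1) = 0 := by
  rw [jetT, ← map_pow, Ideal.Quotient.eq_zero_iff_mem]
  exact Ideal.subset_span rfl

theorem jetT_pow_ne_zero [Nontrivial A] : jetT A m ^ m ≠ 0 := by
  rw [jetT, ← map_pow, Ne, Ideal.Quotient.eq_zero_iff_mem, Ideal.mem_span_singleton,
    X_pow_dvd_iff]
  intro h
  simpa using h m m.lt_succ_self

theorem span_jetT_pow_succ : Ideal.span {jetT A m} ^ (m + 1) = ⊥ := by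
  rw [Ideal.span_singleton_pow, jetT_pow_succ, Ideal.span_singleton_eq_bot]

noncomputable def jetEval : JetTrunc A m →+* A :=
  Ideal.Quotient.lift _ constantCoeff fun P hP => by
    obtain ⟨Q, rfl⟩ := Ideal.mem_span_singleton'.mp hP
    simp

theorem ker_jetEval : RingHom.ker (jetEval A m) = Ideal.span {jetT A m} := by
  refine le_antisymm (fun z hz => ?_) ((Ideal.span_singleton_le_iff_mem _).mpr ?_)
  · obtain ⟨P, rfl⟩ := Ideal.Quotient.mk_surjective z
    obtain ⟨Q, rfl⟩ := X_dvd_iff.mpr (by simpa [jetEval] using hz)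
    exact Ideal.mem_span_singleton'.mpr
      ⟨Ideal.Quotient.mk _ Q, by rw [jetT, ← map_mul, mul_comm]⟩
  · simp [jetEval, jetT]

theorem isRadical_span_jetT [IsReduced A] : (Ideal.span {jetT A m}).IsRadical :=
  ker_jetEval A m ▸ (RingHom.ker_isRadical_iff_reduced_of_surjective (f := jetEval A m)
    fun a => ⟨Ideal.Quotient.mk _ (C a), by simp [jetEval]⟩).mpr ‹_›

variable {A m}

theorem mem_span_jetT_of_jetT_pow_mul_eq_zero {z : JetTrunc A m} (hz : jetT A m ^ m * z = 0) :
    z ∈ Ideal.span {jetT A m} := by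
  obtain ⟨P, rfl⟩ := Ideal.Quotient.mk_surjective z
  rw [jetT, ← map_pow, ← map_mul, Ideal.Quotient.eq_zero_iff_mem, Ideal.mem_span_singleton]
    at hz
  obtain ⟨Q, hQ⟩ := hz
  rw [pow_succ, mul_assoc] at hQ
  rw [(isRegular_X_pow m).left hQ, map_mul]
  exact Ideal.mul_mem_right _ _ (Ideal.subset_span rfl)

end JetTrunc

section JetSupportClosure

variable {k R : Type} [CommRing k] [CommRing R] [Algebra k R] {𝔪 I : Ideal R} {m : ℕ}

theorem JetSupportTest.exists_map_mul_eq_jetT_pow_three_mul (T : JetSupportTest k 𝔪 m I)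
    {x y : R} (hx : x ∈ 𝔪) (hy : y ∈ 𝔪) {p q : ℕ} (hpq : p + q ≤ m)
    (hI : x ^ p * y ^ q ∈ I) : ∃ w, T.φ (x * y) = jetT T.A m ^ 3 * w := by
  set t := jetT T.A m
  obtain ⟨u, hu⟩ := Ideal.mem_span_singleton'.mp (T.max_to_t x hx)
  obtain ⟨v, hv⟩ := Ideal.mem_span_singleton'.mp (T.max_to_t y hy)
  have hkill : t ^ m * (u ^ p * v ^ q) = 0 := by
    have h := T.ker_I _ hI
    rw [map_mul, map_pow, map_pow, ← hu, ← hv] at h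
    obtain ⟨r, rfl⟩ := Nat.exists_eq_add_of_le hpq
    calc t ^ (p + q + r) * (u ^ p * v ^ q) = t ^ r * ((u * t) ^ p * (v * t) ^ q) := by ring
      _ = 0 := by rw [h, mul_zero]
  -- `(u v) ^ (p + q)` is a multiple of `u ^ p v ^ q`, and `A` is reduced
  have huv : u * v ∈ Ideal.span {t} := isRadical_span_jetT T.A m ⟨p + q, by
    convert Ideal.mul_mem_right (u ^ q * v ^ p) _ (mem_span_jetT_of_jetT_pow_mul_eq_zero hkill)
      using 1
    ring⟩
  obtain ⟨w, hw⟩ := Ideal.mem_span_singleton'.mp huv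
  exact ⟨w, by rw [map_mul, ← hu, ← hv]; linear_combination (-t ^ 2) * hw⟩

theorem pow_mul_pow_mem_jetSupportClosure {x y : R} (hx : x ∈ 𝔪) (hy : y ∈ 𝔪) {p q : ℕ}
    (hpq : p + q ≤ m) (hI : x ^ p * y ^ q ∈ I) {e : ℕ} (he : m < 3 * e) :
    x ^ e * y ^ e ∈ jetSupportClosure k 𝔪 m I := by
  rw [jetSupportClosure, Ideal.mem_sInf]
  rintro J ⟨T, rfl⟩
  obtain ⟨w, hw⟩ := T.exists_map_mul_eq_jetT_pow_three_mul hx hy hpq hI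
  rw [RingHom.mem_ker, ← mul_pow, map_pow, hw, mul_pow, ← pow_mul,
    pow_eq_zero_of_le he (jetT_pow_succ T.A m), zero_mul]

end JetSupportClosure

namespace MvPowerSeries

variable {σ : Type*} [Finite σ] (A : Type) [CommRing A] (m : ℕ)

noncomputable def substJetT : MvPowerSeries σ A →ₐ[A] JetTrunc A m :=
  aevalOfPowEqBot (span_jetT_pow_succ A m) (fun _ => jetT A m)
    fun _ => Ideal.mem_span_singleton_self _

variable {A m}

theorem substJetT_X_pow_mul_X_pow (i j : σ) (a b : ℕ) :
    substJetT A m (X i ^ a * X j ^ b) = jetT A m ^ (a + b) := by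
  rw [map_mul, map_pow, map_pow, substJetT, aevalOfPowEqBot_X, aevalOfPowEqBot_X, ← pow_add]

theorem substJetT_mem_span_jetT {f : MvPowerSeries σ A} (hf : constantCoeff f = 0) :
    substJetT A m f ∈ Ideal.span {jetT A m} :=
  aevalOfPowEqBot_mem _ _ hf

end MvPowerSeries

open MvPowerSeries in
theorem X_pow_mul_X_pow_not_mem_jetSupportClosure (k : Type) [Field k] {n : ℕ} (i j : Fin n)
    {a b p q m : ℕ} (hab : a + b ≤ m) (hpq : m < p + q) :
    X i ^ a * X j ^ b ∉ jetSupportClosure k (mIdeal k n) m (Ideal.span {X i ^ p * X j ^ q}) := by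
  let T : JetSupportTest k (mIdeal k n) m (Ideal.span {X i ^ p * X j ^ q}) :=
    { A := k
      φ := substJetT k m
      ker_I := fun f hf => by
        obtain ⟨g, rfl⟩ := Ideal.mem_span_singleton'.mp hf
        rw [map_mul, substJetT_X_pow_mul_X_pow, pow_eq_zero_of_le hpq (jetT_pow_succ k m),
          mul_zero]
      max_to_t := fun f hf => substJetT_mem_span_jetT (RingHom.mem_ker.mp hf) }
  have hle : jetSupportClosure k _ m _ ≤ RingHom.ker T.φ := sInf_le ⟨T, rfl⟩
  intro h
  have h0 : jetT k m ^ (a + b) = 0 := by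
    rw [← substJetT_X_pow_mul_X_pow i j]
    exact hle h
  exact jetT_pow_ne_zero k m (pow_eq_zero_of_le hab h0)

theorem jetSupportClosure_not_monotone_general (k : Type) [Field k] :
    xx k ^ 2 * yy k ^ 2 ∈
        jetSupportClosure k (mIdeal k 2) 5 (Ideal.span {xx k ^ 2 * yy k ^ 3}) ∧
      xx k ^ 2 * yy k ^ 2 ∉
        jetSupportClosure k (mIdeal k 2) 4 (Ideal.span {xx k ^ 2 * yy k ^ 3}) ∧
      ¬ jetSupportClosure k (mIdeal k 2) 5 (Ideal.span {xx k ^ 2 * yy k ^ 3}) ≤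
          jetSupportClosure k (mIdeal k 2) 4 (Ideal.span {xx k ^ 2 * yy k ^ 3}) := by
  have hX (i : Fin 2) : MvPowerSeries.X i ∈ mIdeal k 2 := MvPowerSeries.constantCoeff_X i
  have h5 : xx k ^ 2 * yy k ^ 2 ∈
      jetSupportClosure k (mIdeal k 2) 5 (Ideal.span {xx k ^ 2 * yy k ^ 3}) :=
    pow_mul_pow_mem_jetSupportClosure (hX 0) (hX 1) (p := 2) (q := 3) le_rfl
      (Ideal.mem_span_singleton_self _) (by norm_num)
  have h4 : xx k ^ 2 * yy k ^ 2 ∉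
      jetSupportClosure k (mIdeal k 2) 4 (Ideal.span {xx k ^ 2 * yy k ^ 3}) :=
    X_pow_mul_X_pow_not_mem_jetSupportClosure k 0 1 le_rfl (by norm_num)
  exact ⟨h5, h4, fun hle => h4 (hle h5)⟩

/-- jet support closures need not be monotone: in `k[[x, y]]` with
`I = (x^2 y^3)`, one has `x^2 y^2 ∈ I^{5-jsc}` but `x^2 y^2 ∉ I^{4-jsc}`; hence
`I^{5-jsc} ⊄ I^{4-jsc}`. -/
theorem jetSupportClosure_not_monotone (k : Type) [Field k] [IsAlgClosed k] [CharZero k] :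
    xx k ^ 2 * yy k ^ 2 ∈
        jetSupportClosure k (mIdeal k 2) 5 (Ideal.span {xx k ^ 2 * yy k ^ 3}) ∧
      xx k ^ 2 * yy k ^ 2 ∉
        jetSupportClosure k (mIdeal k 2) 4 (Ideal.span {xx k ^ 2 * yy k ^ 3}) ∧
      ¬ jetSupportClosure k (mIdeal k 2) 5 (Ideal.span {xx k ^ 2 * yy k ^ 3}) ≤
          jetSupportClosure k (mIdeal k 2) 4 (Ideal.span {xx k ^ 2 * yy k ^ 3}) :=
  jetSupportClosure_not_monotone_general k
end

section
/- For any ideal I ⊆ R = k[[x_1, ..., x_n]] and any p, q ∈ ℕ, one has I^{p-jc} · I^{q-jc} ⊆ I^{(p+q+1)-jc}. Consequently the function f_I : R/I → ℕ ∪ {∞}, defined by f_I(g) = m + 1 if g ∈ I^{m-jc}/I and g ∉ I^{(m+1)-jc}/I (with f_I(g) = 0 if g ∉ m, f_I(g) = ∞ if g ∈ I^{∞-jc}/I), satisfies f_I(xy) ≥ f_I(x) + f_I(y), f_I(x + y) ≥ min(f_I(x), f_I(y)), f_I(1) = 0 and f_I(0) = ∞; i.e. f_I is a filtration on R/I. 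-/
/-!
If `r` and `s` lie in the `p`- and `q`-th jet closures, then for every jet `φ` of order
`p + q + 1` the truncations of `φ` to orders `p` and `q` are jets as well, so `φ r` and `φ s` are
divisible by `t^(p+1)` and `t^(q+1)`, and `φ (r s)` by `t^(p+q+2) = 0`. The jet closures decrease
with the order: a jet of order `p` over `A` becomes one of order `q ≥ p` over `A[s]/(s^(p+1))`
through the injective substitution `t ↦ s t`.

Writing `F_m = I^{m-jc}/I`, the function `f_I g = sup {m + 1 | g ∈ F_m}` satisfies
`m < f_I g ↔ g ∈ F_m` because the `F_m` decrease, so the filtration axioms reduce to the `F_m`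
being ideals with `F_p F_q ⊆ F_{p+q+1}`, and to `1 ∉ F_0`, which holds because the jets that
factor through `R/𝔪` force `F_0 ⊆ 𝔪/I`.
-/

open Polynomial

/-- The function `f_I : R/I → ℕ ∪ {∞}` attached to the chain of jet closures of `I`:
`f_I g` is the supremum of `m + 1` over all `m` with `g ∈ I^{m-jc}/I` (so `f_I g = m + 1`
when `g ∈ I^{m-jc}/I` and `g ∉ I^{(m+1)-jc}/I`, `f_I g = 0` when `g ∉ 𝔪/I = I^{0-jc}/I`,
and `f_I g = ∞` when `g ∈ I^{∞-jc}/I = ∩ I^{m-jc}/I`). -/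
noncomputable def fI (k : Type) [Field k] {n : ℕ} (I : Ideal (MvPowerSeries (Fin n) k))
    (g : MvPowerSeries (Fin n) k ⧸ I) : ℕ∞ :=
  ⨆ (m : ℕ) (_ : g ∈ (jetClosure k (mIdeal k n) m I).map (Ideal.Quotient.mk I)),
    ((m : ℕ∞) + 1)

theorem Polynomial.coeff_aeval_C_mul_X {A B : Type*} [CommRing A] [CommRing B] [Algebra A B]
    (b : B) (P : A[X]) (i : ℕ) :
    (aeval (C b * X) P).coeff i = algebraMap A B (P.coeff i) * b ^ i := by
  rw [← aeval_map_algebraMap B, ← comp_eq_aeval, comp_C_mul_X_coeff, coeff_map]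

namespace JetTrunc

variable {A : Type} [CommRing A] {m p q : ℕ}

theorem mk_eq_zero_iff {P : A[X]} :
    (Ideal.Quotient.mk _ P : JetTrunc A m) = 0 ↔ ∀ i ≤ m, P.coeff i = 0 := by
  rw [Ideal.Quotient.eq_zero_iff_mem, Ideal.mem_span_singleton, X_pow_dvd_iff]
  simp only [Nat.lt_succ_iff]

theorem jetT_pow_succ : jetT A m ^ (m + 1) = 0 :=
  Ideal.Quotient.eq_zero_iff_mem.mpr (Ideal.mem_span_singleton_self _)

theorem span_X_pow_succ_le (h : p ≤ m) :
    Ideal.span {(X : A[X]) ^ (m + 1)} ≤ Ideal.span {X ^ (p + 1)} :=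
  Ideal.span_singleton_le_span_singleton.mpr (pow_dvd_pow X (by omega))

variable (k : Type) [CommRing k] [Algebra k A]

noncomputable def trunc (h : p ≤ m) : JetTrunc A m →ₐ[k] JetTrunc A p :=
  Ideal.Quotient.factorₐ k (span_X_pow_succ_le h)

theorem trunc_jetT (h : p ≤ m) : trunc k h (jetT A m) = jetT A p := rfl

theorem jetT_pow_dvd_of_trunc_eq_zero (h : p ≤ m) {x : JetTrunc A m}
    (hx : trunc k h x = 0) : jetT A m ^ (p + 1) ∣ x := by
  have hker : x ∈ RingHom.ker (Ideal.Quotient.factor (span_X_pow_succ_le (A := A) h)) := hx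
  rwa [Ideal.Quotient.factor_ker, Ideal.map_span, Set.image_singleton, map_pow,
    Ideal.mem_span_singleton] at hker

/-- The substitution `t ↦ s t : A[t]/(t^(p+1)) → (A[s]/(s^(p+1)))[t]/(t^(q+1))`. -/
noncomputable def stretch (p q : ℕ) : JetTrunc A p →ₐ[k] JetTrunc (JetTrunc A p) q :=
  Ideal.Quotient.liftₐ _
    ((Ideal.Quotient.mkₐ k _).comp ((aeval (C (jetT A p) * X)).restrictScalars k)) <| by
    intro P hP
    obtain ⟨c, rfl⟩ := Ideal.mem_span_singleton'.mp hP
    simp [mul_pow, ← C_pow, jetT_pow_succ]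

theorem stretch_mk (P : A[X]) :
    stretch k p q (Ideal.Quotient.mk _ P) =
      (Ideal.Quotient.mk _ (aeval (C (jetT A p) * X) P) : JetTrunc _ q) := rfl

theorem jetT_dvd_stretch_jetT : jetT (JetTrunc A p) q ∣ stretch k p q (jetT A p) :=
  ⟨Ideal.Quotient.mk _ (C (jetT A p)), by
    rw [jetT, stretch_mk, aeval_X, mul_comm, map_mul]; rfl⟩

theorem stretch_injective (h : p ≤ q) : Function.Injective (stretch k (A := A) p q) := by
  refine (injective_iff_map_eq_zero _).mpr fun x hx => ?_
  obtain ⟨P, rfl⟩ := Ideal.Quotient.mk_surjective x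
  rw [stretch_mk, mk_eq_zero_iff] at hx
  refine mk_eq_zero_iff.mpr fun i hi => ?_
  have hcoeff : (Ideal.Quotient.mk _ (C (P.coeff i) * X ^ i) : JetTrunc A p) = 0 := by
    have := hx i (hi.trans h)
    rwa [coeff_aeval_C_mul_X] at this
  simpa using mk_eq_zero_iff.mp hcoeff i hi

end JetTrunc

section JetClosure

variable {k : Type} [CommRing k] {R : Type} [CommRing R] [Algebra k R]
  {𝔪 I : Ideal R} {m p q : ℕ}

noncomputable def JetTest.comp (T : JetTest k 𝔪 m I) {B : Type} [CommRing B] [Algebra k B]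
    {m' : ℕ} (ψ : JetTrunc T.A m →ₐ[k] JetTrunc B m') (hψ : jetT B m' ∣ ψ (jetT T.A m)) :
    JetTest k 𝔪 m' I where
  A := B
  φ := ψ.comp T.φ
  ker_I f hf := by rw [AlgHom.comp_apply, T.ker_I f hf, map_zero]
  max_to_t f hf := Ideal.mem_span_singleton.mpr <|
    hψ.trans (map_dvd ψ (Ideal.mem_span_singleton.mp (T.max_to_t f hf)))

theorem mem_jetClosure_iff {f : R} :
    f ∈ jetClosure k 𝔪 m I ↔ ∀ T : JetTest k 𝔪 m I, T.φ f = 0 := by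
  simp only [jetClosure, Ideal.mem_sInf, Set.mem_ofPred_eq, forall_exists_index,
    forall_eq_apply_imp_iff, RingHom.mem_ker]

theorem jetClosure_antitone : Antitone (jetClosure k 𝔪 · I) := by
  intro p q h f hf
  refine mem_jetClosure_iff.mpr fun T => JetTrunc.stretch_injective k h ?_
  rw [map_zero]
  exact mem_jetClosure_iff.mp hf (T.comp _ (JetTrunc.jetT_dvd_stretch_jetT k))

theorem jetClosure_mul_le :
    jetClosure k 𝔪 p I * jetClosure k 𝔪 q I ≤ jetClosure k 𝔪 (p + q + 1) I := by
  refine Ideal.mul_le.mpr fun r hr s hs => mem_jetClosure_iff.mpr fun T => ?_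
  have hp : p ≤ p + q + 1 := by omega
  have hq : q ≤ p + q + 1 := by omega
  obtain ⟨u, hu⟩ : jetT T.A _ ^ (p + 1) ∣ T.φ r :=
    JetTrunc.jetT_pow_dvd_of_trunc_eq_zero k hp <|
      mem_jetClosure_iff.mp hr (T.comp _ (JetTrunc.trunc_jetT k hp).symm.dvd)
  obtain ⟨v, hv⟩ : jetT T.A _ ^ (q + 1) ∣ T.φ s :=
    JetTrunc.jetT_pow_dvd_of_trunc_eq_zero k hq <|
      mem_jetClosure_iff.mp hs (T.comp _ (JetTrunc.trunc_jetT k hq).symm.dvd)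
  calc T.φ (r * s) = jetT T.A (p + q + 1) ^ (p + q + 1 + 1) * (u * v) := by
        rw [map_mul, hu, hv]; ring
    _ = 0 := by rw [JetTrunc.jetT_pow_succ, zero_mul]

noncomputable def JetTest.residue (hI : I ≤ 𝔪) (m : ℕ) : JetTest k 𝔪 m I where
  A := R ⧸ 𝔪
  φ := (IsScalarTower.toAlgHom k (R ⧸ 𝔪) (JetTrunc (R ⧸ 𝔪) m)).comp
    (Ideal.Quotient.mkₐ k 𝔪)
  ker_I f hf := by simp [Ideal.Quotient.eq_zero_iff_mem.mpr (hI hf)]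
  max_to_t f hf := by simp [Ideal.Quotient.eq_zero_iff_mem.mpr hf]

theorem jetClosure_le (hI : I ≤ 𝔪) (m : ℕ) : jetClosure k 𝔪 m I ≤ 𝔪 := by
  intro f hf
  have h := JetTrunc.mk_eq_zero_iff.mp (mem_jetClosure_iff.mp hf (JetTest.residue hI m)) 0
    (Nat.zero_le m)
  simpa [Ideal.Quotient.eq_zero_iff_mem] using h

end JetClosure

section FiltrationOrder

variable {S : Type*} [CommSemiring S]

noncomputable def filtrationOrder (J : ℕ → Ideal S) (g : S) : ℕ∞ :=
  ⨆ (m : ℕ) (_ : g ∈ J m), ((m : ℕ∞) + 1)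

variable {J : ℕ → Ideal S} {g : S} {m : ℕ}

theorem add_one_le_filtrationOrder (h : g ∈ J m) : (m : ℕ∞) + 1 ≤ filtrationOrder J g :=
  le_iSup₂ (f := fun m (_ : g ∈ J m) => (m : ℕ∞) + 1) m h

theorem natCast_lt_filtrationOrder_iff (hJ : Antitone J) :
    (m : ℕ∞) < filtrationOrder J g ↔ g ∈ J m := by
  refine ⟨fun h => ?_, fun h => ENat.natCast_add_one_le_iff.mp (add_one_le_filtrationOrder h)⟩
  obtain ⟨j, hj, hmj⟩ := by simpa only [filtrationOrder, lt_iSup_iff] using h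
  exact hJ (by exact_mod_cast (ENat.lt_add_one_iff (ENat.natCast_ne_top j)).mp hmj) hj

theorem filtrationOrder_zero (J : ℕ → Ideal S) : filtrationOrder J 0 = ⊤ :=
  ENat.eq_top_iff_forall_gt.mpr fun m =>
    ENat.natCast_add_one_le_iff.mp (add_one_le_filtrationOrder (J m).zero_mem)

theorem filtrationOrder_one (hJ : Antitone J) (h : 1 ∉ J 0) : filtrationOrder J 1 = 0 :=
  nonpos_iff_eq_zero.mp <| not_lt.mp fun hpos =>
    h ((natCast_lt_filtrationOrder_iff hJ).mp (by exact_mod_cast hpos))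

theorem min_le_filtrationOrder_add (hJ : Antitone J) (x y : S) :
    min (filtrationOrder J x) (filtrationOrder J y) ≤ filtrationOrder J (x + y) := by
  refine le_of_forall_lt fun c hc => ?_
  lift c to ℕ using hc.ne_top
  rw [lt_min_iff, natCast_lt_filtrationOrder_iff hJ, natCast_lt_filtrationOrder_iff hJ] at hc
  exact (natCast_lt_filtrationOrder_iff hJ).mpr (add_mem hc.1 hc.2)

theorem filtrationOrder_add_le_mul (hmul : ∀ p q, J p * J q ≤ J (p + q + 1)) (x y : S) :
    filtrationOrder J x + filtrationOrder J y ≤ filtrationOrder J (x * y) := by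
  refine ENat.iSup_add_iSup_le fun a b => ?_
  by_cases hx : x ∈ J a <;> by_cases hy : y ∈ J b <;>
    simp only [hx, hy, iSup_pos, iSup_neg, not_false_eq_true, zero_add, add_zero, bot_eq_zero,
      zero_le]
  · calc ((a : ℕ∞) + 1) + ((b : ℕ∞) + 1) = ((a + b + 1 : ℕ) : ℕ∞) + 1 := by
          push_cast; ring
      _ ≤ filtrationOrder J (x * y) :=
        add_one_le_filtrationOrder (hmul a b (Ideal.mul_mem_mul hx hy))
  · exact add_one_le_filtrationOrder (Ideal.mul_mem_right y _ hx)
  · exact add_one_le_filtrationOrder (Ideal.mul_mem_left _ x hy)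

end FiltrationOrder

theorem jetClosure_filtration_general (k : Type) [Field k] (n : ℕ)
    (I : Ideal (MvPowerSeries (Fin n) k)) (hI : I ≤ mIdeal k n) :
    (∀ p q : ℕ,
        jetClosure k (mIdeal k n) p I * jetClosure k (mIdeal k n) q I ≤
          jetClosure k (mIdeal k n) (p + q + 1) I) ∧
      (∀ x y : MvPowerSeries (Fin n) k ⧸ I, fI k I x + fI k I y ≤ fI k I (x * y)) ∧
      (∀ x y : MvPowerSeries (Fin n) k ⧸ I, min (fI k I x) (fI k I y) ≤ fI k I (x + y)) ∧
      fI k I 1 = 0 ∧ fI k I 0 = ⊤ := by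
  let J (m : ℕ) := (jetClosure k (mIdeal k n) m I).map (Ideal.Quotient.mk I)
  have hJ : Antitone J := fun p q h => Ideal.map_mono (jetClosure_antitone h)
  have hmul (p q : ℕ) : J p * J q ≤ J (p + q + 1) := by
    rw [← Ideal.map_mul]
    exact Ideal.map_mono jetClosure_mul_le
  have hone : (1 : MvPowerSeries (Fin n) k ⧸ I) ∉ J 0 := by
    rw [← map_one (Ideal.Quotient.mk I), Ideal.mem_quotient_iff_mem_sup]
    exact fun h => (RingHom.ker_ne_top _ : mIdeal k n ≠ ⊤) <|
      (Ideal.eq_top_iff_one _).mpr (sup_le (jetClosure_le hI 0) hI h)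
  exact ⟨fun p q => jetClosure_mul_le, filtrationOrder_add_le_mul hmul,
    min_le_filtrationOrder_add hJ, filtrationOrder_one hJ hone, filtrationOrder_zero J⟩

/-- `I^{p-jc} · I^{q-jc} ⊆ I^{(p+q+1)-jc}` for all `p, q`; consequently the
function `f_I : R/I → ℕ ∪ {∞}` satisfies `f_I (xy) ≥ f_I x + f_I y`,
`f_I (x + y) ≥ min (f_I x) (f_I y)`, `f_I 1 = 0` and `f_I 0 = ∞`; i.e. `f_I` is a
filtration on `R/I`. -/
theorem jetClosure_filtration (k : Type) [Field k] [IsAlgClosed k] [CharZero k] (n : ℕ)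
    (I : Ideal (MvPowerSeries (Fin n) k)) (hI : I ≤ mIdeal k n) :
    (∀ p q : ℕ,
        jetClosure k (mIdeal k n) p I * jetClosure k (mIdeal k n) q I ≤
          jetClosure k (mIdeal k n) (p + q + 1) I) ∧
      (∀ x y : MvPowerSeries (Fin n) k ⧸ I, fI k I x + fI k I y ≤ fI k I (x * y)) ∧
      (∀ x y : MvPowerSeries (Fin n) k ⧸ I, min (fI k I x) (fI k I y) ≤ fI k I (x + y)) ∧
      fI k I 1 = 0 ∧ fI k I 0 = ⊤ :=
  jetClosure_filtration_general k n I hI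
end
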